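/- arXiv:1406.4571 — 5 statements merged into one kernel-verified Lean document; each statement's English description precedes it below -/
import Mathlib

section
/- Let L1, L2, L3 be real numbers with L1 + L2 > 0 and L1 + L3 > 0, and set ν = min{L1 + L2, L1 + L3}. Then for any two symmetric traceless real 2×2 matrices G₁, G₂ (playing the role of the partial derivatives ∂₁Q, ∂₂Q of a map Q into S^(2)), one has L1·Σ_{i,j,k}((G_k)_{ij})² + L2·Σ_{i,j,k}(G_j)_{ik}(G_k)_{ij} + L3·Σ_i (Σ_j (G_j)_{ij})(Σ_k (G_k)_{ik}) ≥ ν·Σ_{i,j,k}((G_k)_{ij})², where all indices range over {1,2}. -/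
/-!
Write a symmetric traceless `G k` as `!![a k, b k; b k, -a k]` and set `z k = a k + i b k`.
Then the squared norm of `G` is `2 (|z 0|² + |z 1|²) = |z 0 + i z 1|² + |z 0 - i z 1|²`,
the `L2` term is `|z 0 + i z 1|²` and the `L3` term (the squared divergence) is `|z 0 - i z 1|²`.
So the density is `(L1 + L2) |z 0 + i z 1|² + (L1 + L3) |z 0 - i z 1|²`, and both coefficients are `≥ ν`.
-/

lemma Matrix.apply_one_one_eq_neg_of_trace_eq_zero {R : Type*} [AddCommGroup R]
    {A : Matrix (Fin 2) (Fin 2) R} (htr : A.trace = 0) : A 1 1 = -A 0 0 := by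
  rw [Matrix.trace_fin_two] at htr
  exact eq_neg_of_add_eq_zero_right htr

/-- `|z 0 + i z 1|²` in the notation of the header. -/
def normSqPlus (G : Fin 2 → Matrix (Fin 2) (Fin 2) ℝ) : ℝ :=
  (G 0 0 0 - G 1 0 1) ^ 2 + (G 0 0 1 + G 1 0 0) ^ 2

/-- `|z 0 - i z 1|²` in the notation of the header. -/
def normSqMinus (G : Fin 2 → Matrix (Fin 2) (Fin 2) ℝ) : ℝ :=
  (G 0 0 0 + G 1 0 1) ^ 2 + (G 0 0 1 - G 1 0 0) ^ 2

lemma min_mul_add_le_mul_add_mul {α β p q : ℝ} (hp : 0 ≤ p) (hq : 0 ≤ q) :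
    min α β * (p + q) ≤ α * p + β * q := by
  rw [mul_add]
  gcongr
  · exact min_le_left α β
  · exact min_le_right α β

section SymmTraceless

variable {G : Fin 2 → Matrix (Fin 2) (Fin 2) ℝ} (hsym : ∀ k, (G k).IsSymm)
  (htr : ∀ k, (G k).trace = 0)
include hsym htr

lemma sum_sq_entries_eq_normSqPlus_add_normSqMinus :
    ∑ i, ∑ j, ∑ k, (G k i j) ^ 2 = normSqPlus G + normSqMinus G := by
  simp only [Fin.sum_univ_two, fun k ↦ (hsym k).apply 0 1,
    fun k ↦ Matrix.apply_one_one_eq_neg_of_trace_eq_zero (htr k), normSqPlus, normSqMinus]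
  ring

lemma sum_twist_eq_normSqPlus :
    ∑ i, ∑ j, ∑ k, G j i k * G k i j = normSqPlus G := by
  simp only [Fin.sum_univ_two, fun k ↦ (hsym k).apply 0 1,
    fun k ↦ Matrix.apply_one_one_eq_neg_of_trace_eq_zero (htr k), normSqPlus]
  ring

lemma sum_divergence_mul_self_eq_normSqMinus :
    ∑ i, (∑ j, G j i j) * (∑ k, G k i k) = normSqMinus G := by
  simp only [Fin.sum_univ_two, fun k ↦ (hsym k).apply 0 1,
    fun k ↦ Matrix.apply_one_one_eq_neg_of_trace_eq_zero (htr k), normSqMinus]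
  ring

end SymmTraceless

theorem elastic_coercivity_2d_general (L1 L2 L3 : ℝ)
    (ν : ℝ) (hν : ν = min (L1 + L2) (L1 + L3))
    (G : Fin 2 → Matrix (Fin 2) (Fin 2) ℝ)
    (hsym : ∀ k, (G k).IsSymm) (htr : ∀ k, (G k).trace = 0) :
    L1 * (∑ i, ∑ j, ∑ k, (G k i j) ^ 2)
      + L2 * (∑ i, ∑ j, ∑ k, G j i k * G k i j)
      + L3 * (∑ i, (∑ j, G j i j) * (∑ k, G k i k))
    ≥ ν * (∑ i, ∑ j, ∑ k, (G k i j) ^ 2) := by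
  rw [sum_sq_entries_eq_normSqPlus_add_normSqMinus hsym htr, sum_twist_eq_normSqPlus hsym htr,
    sum_divergence_mul_self_eq_normSqMinus hsym htr, hν]
  have hplus : 0 ≤ normSqPlus G := by unfold normSqPlus; positivity
  have hminus : 0 ≤ normSqMinus G := by unfold normSqMinus; positivity
  calc min (L1 + L2) (L1 + L3) * (normSqPlus G + normSqMinus G)
      ≤ (L1 + L2) * normSqPlus G + (L1 + L3) * normSqMinus G :=
        min_mul_add_le_mul_add_mul hplus hminus
    _ = L1 * (normSqPlus G + normSqMinus G) + L2 * normSqPlus G + L3 * normSqMinus G := by ring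

/-- 2D coercivity of the elastic energy, pointwise form.
If `L1 + L2 > 0` and `L1 + L3 > 0` and `ν = min (L1+L2) (L1+L3)`, then for any
symmetric traceless real 2×2 matrices `G 0, G 1` (the partial derivatives of a
map into `S^(2)`) the elastic density is coercive. -/
theorem elastic_coercivity_2d (L1 L2 L3 : ℝ) (h12 : 0 < L1 + L2) (h13 : 0 < L1 + L3)
    (ν : ℝ) (hν : ν = min (L1 + L2) (L1 + L3))
    (G : Fin 2 → Matrix (Fin 2) (Fin 2) ℝ)
    (hsym : ∀ k, (G k).IsSymm) (htr : ∀ k, (G k).trace = 0) :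
    L1 * (∑ i, ∑ j, ∑ k, (G k i j) ^ 2)
      + L2 * (∑ i, ∑ j, ∑ k, G j i k * G k i j)
      + L3 * (∑ i, (∑ j, G j i j) * (∑ k, G k i k))
    ≥ ν * (∑ i, ∑ j, ∑ k, (G k i j) ^ 2) :=
  elastic_coercivity_2d_general L1 L2 L3 ν hν G hsym htr
end

section
/- Let Ω ⊂ ℝ² be a bounded open set with smooth boundary, let a ∈ ℝ, c > 0, L4 ≠ 0, and L1, L2, L3 satisfy L1 + L2 > 0 and L1 + L3 > 0, so that ζ := 2L1 + L2 + L3 > 0. Set η₁ := ζ² / ((1+4√2)² L4²). Let Q : [0,T] × closure(Ω) → S^(2) be continuous, C¹ in t and C² in x on (0,T) × Ω, solve the 2D Landau–de Gennes gradient-flow system on (0,T) × Ω, and satisfy the time-independent Dirichlet condition Q(t,x) = Q̃(x) for all x ∈ ∂Ω and t ∈ [0,T], where Q̃ = Q(0,·)|_{∂Ω}. If sup_{x∈∂Ω}|Q̃(x)| ≤ sup_{x∈Ω}|Q(0,x)| < √(2η₁) and |a| ≤ 2cη₁, then sup_{(t,x) ∈ (0,T)×Ω} |Q(t,x)| ≤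 √(2η₁). -/
open MeasureTheory Set

noncomputable section

/-- The plane `ℝ²`. -/
abbrev E2 := EuclideanSpace ℝ (Fin 2)

/-- Partial derivative `∂_k f` of a scalar function on `ℝ²`. -/
noncomputable def pd (k : Fin 2) (f : E2 → ℝ) (x : E2) : ℝ :=
  fderiv ℝ f x (EuclideanSpace.single k 1)

/-- Second partial derivative `∂_l ∂_k f`. -/
noncomputable def pd2 (l k : Fin 2) (f : E2 → ℝ) (x : E2) : ℝ :=
  pd l (fun y => pd k f y) x

/-- Frobenius norm `|M| = √(∑ M_{ij}²)` of a real 2×2 matrix. -/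
noncomputable def fnorm (M : Matrix (Fin 2) (Fin 2) ℝ) : ℝ :=
  Real.sqrt (∑ i, ∑ j, (M i j) ^ 2)

/-- The 2D Landau–de Gennes gradient-flow system at the point `(t, x)`:
`∂_t Q_{ij} = 2L1 ΔQ_{ij} − a Q_{ij} − c tr(Q²) Q_{ij}
  + (L2+L3)(∂_j∂_k Q_{ik} + ∂_i∂_k Q_{jk}) − (L2+L3) ∂_l∂_k Q_{lk} δ_{ij}
  + 2L4 ∂_l Q_{ij} ∂_k Q_{lk} + 2L4 Q_{lk} ∂_l∂_k Q_{ij}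
  − L4 ∂_i Q_{kl} ∂_j Q_{kl} + (L4/2)|∇Q|² δ_{ij}`. -/
def LdGeq (a c L1 L2 L3 L4 : ℝ) (Q : ℝ → E2 → Matrix (Fin 2) (Fin 2) ℝ)
    (t : ℝ) (x : E2) : Prop :=
  ∀ i j : Fin 2,
    deriv (fun s => Q s x i j) t =
      2 * L1 * (∑ k, pd2 k k (fun y => Q t y i j) x)
      - a * Q t x i j
      - c * (Q t x * Q t x).trace * Q t x i j
      + (L2 + L3) * ((∑ k, pd2 j k (fun y => Q t y i k) x)
          + (∑ k, pd2 i k (fun y => Q t y j k) x))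
      - (L2 + L3) * (∑ l, ∑ k, pd2 l k (fun y => Q t y l k) x)
          * (if i = j then (1 : ℝ) else 0)
      + 2 * L4 * (∑ l, pd l (fun y => Q t y i j) x * (∑ k, pd k (fun y => Q t y l k) x))
      + 2 * L4 * (∑ l, ∑ k, Q t x l k * pd2 l k (fun y => Q t y i j) x)
      - L4 * (∑ k, ∑ l, pd i (fun y => Q t y k l) x * pd j (fun y => Q t y k l) x)
      + (L4 / 2) * (∑ k, ∑ i', ∑ j', (pd k (fun y => Q t y i' j') x) ^ 2)
          * (if i = j then (1 : ℝ) else 0)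

/-!
Write `Q = !![q₀, q₁; q₁, -q₀]` and `r = q₀² + q₁² = |Q|² / 2`. If `r` exceeded `η₁` somewhere, take
a level `m > η₁` with `9 L4² m < ζ²` and the first time `t₀` at which `r` reaches `m`. The initial
and boundary values stay below `η₁`, so this happens at an interior point `x₀`, which maximises
`r(t₀, ·)` and `r(·, x₀)` on `[0, t₀]`: there `∂ₜ r ≥ 0`, `∇r = 0` and `∇²r ≤ 0`. At such a point
the equation gives `½ ∂ₜ r = tr (A · ½∇²r) - ζ tr G - 3 L4 tr (Q G) - (a + 2 c r) r` with
`A = ζ I + 2 L4 Q` and `G` the Gram matrix of `∇q`. Smallness of `r` makes `A` positive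
semidefinite and `ζ tr G + 3 L4 tr (Q G) ≥ 0`, while `|a| ≤ 2 c η₁ < 2 c r` makes the last term
negative, so `∂ₜ r < 0`, a contradiction.
-/

open Filter Topology

theorem ContDiffAt.differentiableAt_fderiv {E F : Type*} [NormedAddCommGroup E]
    [NormedSpace ℝ E] [NormedAddCommGroup F] [NormedSpace ℝ F] {f : E → F} {x : E}
    (hf : ContDiffAt ℝ 2 f x) : DifferentiableAt ℝ (fderiv ℝ f) x :=
  (hf.fderiv_right (m := 1) (by norm_num)).differentiableAt (by norm_num)

section PartialDerivatives

variable {f g : E2 → ℝ} {x : E2}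

theorem pd_congr (h : f =ᶠ[𝓝 x] g) (k : Fin 2) : pd k f x = pd k g x := by
  rw [pd, pd, h.fderiv_eq]

theorem pd2_congr (h : f =ᶠ[𝓝 x] g) (l k : Fin 2) : pd2 l k f x = pd2 l k g x :=
  pd_congr (h.eventuallyEq_nhds.mono fun _ hy => pd_congr hy k) l

theorem pd_neg (k : Fin 2) : pd k (fun y => -f y) x = -pd k f x := by
  simp [pd, fderiv_fun_neg]

theorem pd2_neg (l k : Fin 2) : pd2 l k (fun y => -f y) x = -pd2 l k f x := by
  simp only [pd2, pd_neg]

theorem pd_const_mul (hf : DifferentiableAt ℝ f x) (c : ℝ) (k : Fin 2) :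
    pd k (fun y => c * f y) x = c * pd k f x := by
  simp [pd, fderiv_const_mul hf]

theorem differentiableAt_pd (hf : ContDiffAt ℝ 2 f x) (k : Fin 2) :
    DifferentiableAt ℝ (fun y => pd k f y) x :=
  hf.differentiableAt_fderiv.clm_apply (differentiableAt_const _)

theorem pd2_eq_fderiv_fderiv (hf : ContDiffAt ℝ 2 f x) (l k : Fin 2) :
    pd2 l k f x = fderiv ℝ (fderiv ℝ f) x (EuclideanSpace.single l 1)
      (EuclideanSpace.single k 1) := by
  rw [pd2, pd, show (fun y => pd k f y) = fun y => fderiv ℝ f y (EuclideanSpace.single k 1)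
    from rfl, fderiv_clm_apply hf.differentiableAt_fderiv (differentiableAt_const _)]
  simp

theorem pd2_comm (hf : ContDiffAt ℝ 2 f x) (l k : Fin 2) : pd2 l k f x = pd2 k l f x := by
  rw [pd2_eq_fderiv_fderiv hf, pd2_eq_fderiv_fderiv hf, (hf.isSymmSndFDerivAt (by simp)).eq]

variable {ι : Type*} [Fintype ι] {u v : ι → E2 → ℝ}

theorem pd_sum_mul (hu : ∀ i, DifferentiableAt ℝ (u i) x)
    (hv : ∀ i, DifferentiableAt ℝ (v i) x) (k : Fin 2) :
    pd k (fun y => ∑ i, u i y * v i y) x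
      = ∑ i, (pd k (u i) x * v i x + u i x * pd k (v i) x) := by
  have h := HasFDerivAt.fun_sum (u := Finset.univ) (A := fun i y => u i y * v i y)
    fun i _ => (hu i).hasFDerivAt.mul (hv i).hasFDerivAt
  rw [pd, h.fderiv]
  simp [pd, add_comm, mul_comm]

theorem pd_sum_sq (hu : ∀ i, DifferentiableAt ℝ (u i) x) (k : Fin 2) :
    pd k (fun y => ∑ i, u i y ^ 2) x = ∑ i, 2 * u i x * pd k (u i) x := by
  simp only [sq, pd_sum_mul hu hu]
  congr 1 with i
  ring

theorem pd2_sum_sq (hu : ∀ i, ContDiffAt ℝ 2 (u i) x) (l k : Fin 2) :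
    pd2 l k (fun y => ∑ i, u i y ^ 2) x
      = 2 * ∑ i, (pd l (u i) x * pd k (u i) x + u i x * pd2 l k (u i) x) := by
  have hnear : ∀ᶠ y in 𝓝 x, ∀ i, DifferentiableAt ℝ (u i) y :=
    eventually_all.2 fun i => (hu i).eventually (by simp) |>.mono
      fun y hy => hy.differentiableAt (by simp)
  have hpd : (fun y => pd k (fun y => ∑ i, u i y ^ 2) y)
      =ᶠ[𝓝 x] fun y => ∑ i, 2 * u i y * pd k (u i) y := by
    filter_upwards [hnear] with y hy using pd_sum_sq hy k
  have hu' i : DifferentiableAt ℝ (u i) x := (hu i).differentiableAt (by simp)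
  rw [pd2, pd_congr hpd, pd_sum_mul (fun i => (hu' i).const_mul 2)
    (fun i => differentiableAt_pd (hu i) k), Finset.mul_sum]
  congr 1 with i
  rw [pd_const_mul (hu' i), pd2]
  ring

end PartialDerivatives

/- If `f'' a > 0`, the second-derivative test makes `a` a local minimum as well, so `f` is locally
constant and `f'' a = 0`. -/
theorem IsLocalMax.deriv_deriv_nonpos {f : ℝ → ℝ} {a : ℝ} (h : IsLocalMax f a)
    (hc : ContinuousAt f a) : deriv (deriv f) a ≤ 0 := by
  by_contra! hpos
  have hconst : f =ᶠ[𝓝 a] fun _ => f a :=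
    (h.and (isLocalMin_of_deriv_deriv_pos hpos h.deriv_eq_zero hc)).mono
      fun y hy => le_antisymm hy.1 hy.2
  have : deriv f =ᶠ[𝓝 a] fun _ => 0 :=
    hconst.eventuallyEq_nhds.mono fun y hy => by rw [hy.deriv_eq, deriv_const]
  rw [this.deriv_eq, deriv_const] at hpos
  exact lt_irrefl 0 hpos

theorem IsLocalMax.fderiv_fderiv_apply_self_nonpos {E : Type*} [NormedAddCommGroup E]
    [NormedSpace ℝ E] {f : E → ℝ} {x : E} (h : IsLocalMax f x) (hf : ContDiffAt ℝ 2 f x)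
    (w : E) : fderiv ℝ (fderiv ℝ f) x w w ≤ 0 := by
  set γ : ℝ → E := fun s => x + s • w
  have hγ0 : γ 0 = x := by simp [γ]
  have hγ : ∀ s, HasDerivAt γ w s := fun s => by
    simpa [γ] using ((hasDerivAt_id s).smul_const w).const_add x
  have hγc : Tendsto γ (𝓝 0) (𝓝 x) := hγ0 ▸ (hγ 0).continuousAt
  have hnear : ∀ᶠ s in 𝓝 (0 : ℝ), DifferentiableAt ℝ f (γ s) :=
    hγc.eventually ((hf.eventually (by simp)).mono fun y hy => hy.differentiableAt (by simp))
  have hd : deriv (f ∘ γ) =ᶠ[𝓝 0] fun s => fderiv ℝ f (γ s) w :=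
    hnear.mono fun s hs => (hs.hasFDerivAt.comp_hasDerivAt s (hγ s)).deriv
  have hdf : DifferentiableAt ℝ (fderiv ℝ f) (γ 0) := hγ0 ▸ hf.differentiableAt_fderiv
  have h2 : HasDerivAt (fun s => fderiv ℝ f (γ s) w) (fderiv ℝ (fderiv ℝ f) x w w) 0 := by
    simpa [hγ0] using
      (hdf.hasFDerivAt.comp_hasDerivAt 0 (hγ 0)).clm_apply (hasDerivAt_const 0 w)
  have hmax : IsLocalMax (f ∘ γ) 0 := (hγ0 ▸ h).comp_continuous (hγ 0).continuousAt
  have := hmax.deriv_deriv_nonpos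
    (ContinuousAt.comp (hγ0 ▸ hf.continuousAt) (hγ 0).continuousAt)
  rwa [hd.deriv_eq, h2.deriv] at this

theorem IsLocalMax.sum_pd2_nonpos {f : E2 → ℝ} {x : E2} (h : IsLocalMax f x)
    (hf : ContDiffAt ℝ 2 f x) (v : Fin 2 → ℝ) : ∑ l, ∑ k, v l * v k * pd2 l k f x ≤ 0 := by
  have := h.fderiv_fderiv_apply_self_nonpos hf (∑ l, v l • EuclideanSpace.single l 1)
  simp only [map_sum, map_smul, FunLike.coe_sum, Finset.sum_apply, FunLike.coe_smul,
    Pi.smul_apply, smul_eq_mul, Finset.mul_sum] at this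
  rw [Finset.sum_comm] at this
  simp only [pd2_eq_fderiv_fderiv hf]
  convert this using 3 with l - k
  ring

theorem HasDerivAt.nonneg_of_isMaxOn_Icc {g : ℝ → ℝ} {d a b : ℝ} (hab : a < b)
    (hg : HasDerivAt g d b) (hmax : IsMaxOn g (Icc a b) b) : 0 ≤ d := by
  have hcone : a - b ∈ posTangentConeAt (Icc a b) b :=
    mem_posTangentConeAt_of_segment_subset (by
      rw [add_sub_cancel, segment_eq_Icc', min_eq_right hab.le, max_eq_left hab.le])
  have := hmax.localize.hasFDerivWithinAt_nonpos hg.hasDerivWithinAt.hasFDerivWithinAt hcone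
  simp only [ContinuousLinearMap.toSpanSingleton_apply, smul_eq_mul] at this
  exact nonneg_of_mul_nonpos_right this (sub_neg.2 hab)

theorem hasDerivAt_sum_sq {ι : Type*} [Fintype ι] {u : ι → ℝ → ℝ} {t : ℝ}
    (hu : ∀ i, DifferentiableAt ℝ (u i) t) :
    HasDerivAt (fun s => ∑ i, u i s ^ 2) (2 * ∑ i, u i t * deriv (u i) t) t := by
  rw [Finset.mul_sum]
  refine HasDerivAt.fun_sum fun i _ => ?_
  simp only [sq]
  exact ((hu i).hasDerivAt.fun_mul (hu i).hasDerivAt).congr_deriv (by ring)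

theorem exists_first_hitting {X : Type*} [TopologicalSpace X] [T2Space X] {K : Set X}
    (hK : IsCompact K) {F : ℝ → X → ℝ} {T m t₁ : ℝ} {x₁ : X}
    (hF : ContinuousOn (fun p : ℝ × X => F p.1 p.2) (Icc 0 T ×ˢ K))
    (h0 : ∀ y ∈ K, F 0 y < m) (ht₁ : t₁ ∈ Icc 0 T) (hx₁ : x₁ ∈ K) (hm : m ≤ F t₁ x₁) :
    ∃ t₀ ∈ Ioc 0 t₁, ∃ x₀ ∈ K, F t₀ x₀ = m ∧ IsMaxOn (F t₀) K x₀ ∧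
      IsMaxOn (F · x₀) (Icc 0 t₀) t₀ := by
  have hsub : Icc 0 t₁ ×ˢ K ⊆ Icc 0 T ×ˢ K := prod_mono (Icc_subset_Icc_right ht₁.2) le_rfl
  set G := Icc 0 t₁ ×ˢ K ∩ (fun p : ℝ × X => F p.1 p.2) ⁻¹' Ici m
  have hG : IsCompact G := (isCompact_Icc.prod hK).of_isClosed_subset
    ((hF.mono hsub).preimage_isClosed_of_isClosed (isClosed_Icc.prod hK.isClosed) isClosed_Ici)
    inter_subset_left
  obtain ⟨p₀, ⟨⟨ht₀, hx₀⟩, hp₀⟩, hmin⟩ :=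
    hG.exists_isMinOn ⟨(t₁, x₁), ⟨⟨ht₁.1, le_rfl⟩, hx₁⟩, hm⟩ continuous_fst.continuousOn
  have hbefore : ∀ s ∈ Ico 0 p₀.1, ∀ y ∈ K, F s y < m := fun s hs y hy => by
    by_contra! hsy
    exact (hmin (a := (s, y)) ⟨⟨⟨hs.1, hs.2.le.trans ht₀.2⟩, hy⟩, hsy⟩ : p₀.1 ≤ s).not_gt hs.2
  have hpos : 0 < p₀.1 := ht₀.1.lt_of_ne fun h => (h0 p₀.2 hx₀).not_ge (h ▸ hp₀)
  have hat : ∀ y ∈ K, F p₀.1 y ≤ m := fun y hy => by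
    have hcont : ContinuousWithinAt (fun s => F s y) (Ico 0 p₀.1) p₀.1 :=
      (hF.comp (continuous_id.prodMk continuous_const).continuousOn
        fun s hs => ⟨hs, hy⟩).continuousWithinAt ⟨hpos.le, ht₀.2.trans ht₁.2⟩ |>.mono
        fun s hs => ⟨hs.1, hs.2.le.trans (ht₀.2.trans ht₁.2)⟩
    refine ContinuousWithinAt.closure_le ?_ hcont continuousWithinAt_const
      fun s hs => (hbefore s hs y hy).le
    rw [closure_Ico hpos.ne]
    exact right_mem_Icc.2 hpos.le
  have hval : F p₀.1 p₀.2 = m := (hat _ hx₀).antisymm hp₀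
  refine ⟨p₀.1, ⟨hpos, ht₀.2⟩, p₀.2, hx₀, hval, fun y hy => hval ▸ hat y hy, fun s hs => ?_⟩
  show F s p₀.2 ≤ F p₀.1 p₀.2
  rcases hs.2.lt_or_eq with hlt | rfl
  · exact hval ▸ (hbefore s ⟨hs.1, hlt⟩ p₀.2 hx₀).le
  · exact le_rfl

-- `α ⬝ (α h₀₀ + β (h₀₁ + h₁₀) + γ h₁₁) = H(α, β) + (α γ - β²) h₁₁` where `H` is the quadratic form.
theorem quadForm_pairing_nonpos {α β γ h₀₀ h₀₁ h₁₀ h₁₁ : ℝ} (hα : 0 ≤ α) (hγ : 0 ≤ γ)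
    (hβ : β ^ 2 ≤ α * γ)
    (hh : ∀ v₀ v₁ : ℝ, v₀ * v₀ * h₀₀ + v₀ * v₁ * h₀₁ + v₁ * v₀ * h₁₀ + v₁ * v₁ * h₁₁ ≤ 0) :
    α * h₀₀ + β * h₀₁ + β * h₁₀ + γ * h₁₁ ≤ 0 := by
  have h₁₁_nonpos : h₁₁ ≤ 0 := by simpa using hh 0 1
  rcases hα.eq_or_lt with rfl | hα
  · obtain rfl : β = 0 := by nlinarith
    nlinarith
  · refine nonpos_of_mul_nonpos_right ?_ hα
    nlinarith [hh α β, mul_nonpos_of_nonneg_of_nonpos (sub_nonneg.2 hβ) h₁₁_nonpos]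

-- Cauchy–Schwarz gives `|tr (Q G)| ≤ |q| tr G` for `Q = !![q₀, q₁; q₁, -q₀]` and the Gram matrix
-- `G` of `(a₀, b₀)`, `(a₁, b₁)`.
theorem trace_gram_add_mul_nonneg {ζ L q₀ q₁ : ℝ} (hζ : 0 ≤ ζ)
    (hsmall : 9 * L ^ 2 * (q₀ ^ 2 + q₁ ^ 2) ≤ ζ ^ 2) (a₀ a₁ b₀ b₁ : ℝ) :
    0 ≤ ζ * (a₀ ^ 2 + b₀ ^ 2 + (a₁ ^ 2 + b₁ ^ 2))
      + 3 * L * (q₀ * ((a₀ ^ 2 + b₀ ^ 2) - (a₁ ^ 2 + b₁ ^ 2)) + 2 * q₁ * (a₀ * a₁ + b₀ * b₁)) := by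
  set X := q₀ * ((a₀ ^ 2 + b₀ ^ 2) - (a₁ ^ 2 + b₁ ^ 2)) + 2 * q₁ * (a₀ * a₁ + b₀ * b₁)
  set T := a₀ ^ 2 + b₀ ^ 2 + (a₁ ^ 2 + b₁ ^ 2)
  have hCS : X ^ 2 ≤ (q₀ ^ 2 + q₁ ^ 2) * T ^ 2 := by
    nlinarith [sq_nonneg (q₀ * (2 * (a₀ * a₁ + b₀ * b₁))
      - q₁ * ((a₀ ^ 2 + b₀ ^ 2) - (a₁ ^ 2 + b₁ ^ 2))), sq_nonneg (a₀ * b₁ - a₁ * b₀)]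
  have hsq : (3 * L * X) ^ 2 ≤ (ζ * T) ^ 2 := by
    nlinarith [mul_le_mul_of_nonneg_left hCS (by positivity : (0:ℝ) ≤ 9 * L ^ 2),
      mul_le_mul_of_nonneg_right hsmall (sq_nonneg T)]
  linarith [(abs_le_of_sq_le_sq' hsq (by positivity)).1]

def gradGram (Dq : Fin 2 → Fin 2 → ℝ) (l k : Fin 2) : ℝ := ∑ α, Dq α l * Dq α k

def halfHessNormSq (q : Fin 2 → ℝ) (Dq : Fin 2 → Fin 2 → ℝ) (D2q : Fin 2 → Fin 2 → Fin 2 → ℝ)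
    (l k : Fin 2) : ℝ :=
  gradGram Dq l k + ∑ α, q α * D2q α l k

/-- `q ⬝ ∂ₜ q` for a solution `Q = !![q 0, q 1; q 1, -q 0]`, in terms of the jet `Dq α k = ∂ₖ q α`,
`D2q α l k = ∂ₗ∂ₖ q α`: `tr (A H)` with `A = ζ I + 2 L4 Q`, first-order terms in `G`, the reaction
term, and a term that vanishes where `∇|q|² = 0`. -/
def ldgRate (a c ζ L4 : ℝ) (q : Fin 2 → ℝ) (Dq : Fin 2 → Fin 2 → ℝ)
    (D2q : Fin 2 → Fin 2 → Fin 2 → ℝ) : ℝ :=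
  let G := gradGram Dq
  let H := halfHessNormSq q Dq D2q
  (ζ + 2 * L4 * q 0) * H 0 0 + 2 * L4 * q 1 * (H 0 1 + H 1 0) + (ζ - 2 * L4 * q 0) * H 1 1
    - ζ * (G 0 0 + G 1 1) - 3 * L4 * (q 0 * (G 0 0 - G 1 1) + 2 * q 1 * G 0 1)
    - (a + 2 * c * ∑ α, q α ^ 2) * ∑ α, q α ^ 2
    + 2 * L4 * ((∑ α, q α * Dq α 0) * (Dq 0 0 + Dq 1 1)
      + (∑ α, q α * Dq α 1) * (Dq 1 0 - Dq 0 1))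

theorem ldgRate_neg {a c ζ L4 : ℝ} {q : Fin 2 → ℝ} {Dq : Fin 2 → Fin 2 → ℝ}
    {D2q : Fin 2 → Fin 2 → Fin 2 → ℝ} (hζ : 0 < ζ)
    (hgrad : ∀ k, ∑ α, q α * Dq α k = 0)
    (hhess : ∀ v : Fin 2 → ℝ, ∑ l, ∑ k, v l * v k * halfHessNormSq q Dq D2q l k ≤ 0)
    (hr : 0 < ∑ α, q α ^ 2) (hsmall : 9 * L4 ^ 2 * ∑ α, q α ^ 2 ≤ ζ ^ 2)
    (ha : 0 < a + 2 * c * ∑ α, q α ^ 2) :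
    ldgRate a c ζ L4 q Dq D2q < 0 := by
  simp only [Fin.sum_univ_two] at hr hsmall ha
  have hsecond := quadForm_pairing_nonpos (α := ζ + 2 * L4 * q 0) (β := 2 * L4 * q 1)
    (γ := ζ - 2 * L4 * q 0) (by nlinarith [sq_nonneg (3 * L4 * q 0 + ζ)])
    (by nlinarith [sq_nonneg (3 * L4 * q 0 - ζ)]) (by nlinarith)
    fun v₀ v₁ => by simpa [Fin.sum_univ_two, add_assoc] using hhess ![v₀, v₁]
  have hfirst := trace_gram_add_mul_nonneg hζ.le hsmall (Dq 0 0) (Dq 0 1) (Dq 1 0) (Dq 1 1)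
  have hzeroth := mul_pos ha hr
  simp only [ldgRate, hgrad, gradGram, Fin.sum_univ_two] at hfirst ⊢
  linarith

section GradientFlow

variable {a c L1 L2 L3 L4 : ℝ} {Q : ℝ → E2 → Matrix (Fin 2) (Fin 2) ℝ} {t : ℝ} {x : E2}

theorem LdGeq.sum_mul_deriv_eq_ldgRate (h : LdGeq a c L1 L2 L3 L4 Q t x)
    (hsymm : ∀ᶠ y in 𝓝 x, (Q t y).IsSymm) (htr : ∀ᶠ y in 𝓝 x, (Q t y).trace = 0)
    (hC2 : ∀ α, ContDiffAt ℝ 2 (fun y => Q t y 0 α) x) :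
    ∑ α, Q t x 0 α * deriv (fun s => Q s x 0 α) t
      = ldgRate a c (2 * L1 + L2 + L3) L4 (fun α => Q t x 0 α)
          (fun α k => pd k (fun y => Q t y 0 α) x)
          (fun α l k => pd2 l k (fun y => Q t y 0 α) x) := by
  have h10 : (fun y => Q t y 1 0) =ᶠ[𝓝 x] fun y => Q t y 0 1 :=
    hsymm.mono fun y hy => hy.apply 0 1
  have h11 : (fun y => Q t y 1 1) =ᶠ[𝓝 x] fun y => -Q t y 0 0 :=
    htr.mono fun y hy => by rw [Matrix.trace_fin_two] at hy; linarith
  have p10 := pd_congr h10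
  have p11 k : pd k (fun y => Q t y 1 1) x = -pd k (fun y => Q t y 0 0) x :=
    (pd_congr h11 k).trans (pd_neg k)
  have pp10 := pd2_congr h10
  have pp11 l k : pd2 l k (fun y => Q t y 1 1) x = -pd2 l k (fun y => Q t y 0 0) x :=
    (pd2_congr h11 l k).trans (pd2_neg l k)
  have schwarz α : pd2 1 0 (fun y => Q t y 0 α) x = pd2 0 1 (fun y => Q t y 0 α) x :=
    pd2_comm (hC2 α) 1 0
  have h00 := h 0 0
  have h01 := h 0 1
  simp only [Fin.sum_univ_two, Matrix.trace_fin_two, Matrix.mul_apply, h10.eq_of_nhds,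
    h11.eq_of_nhds, p10, p11, pp10, pp11, schwarz, if_pos,
    if_neg (show (0 : Fin 2) ≠ 1 by decide)] at h00 h01
  simp only [ldgRate, gradGram, halfHessNormSq, Fin.sum_univ_two, schwarz]
  linear_combination Q t x 0 0 * h00 + Q t x 0 1 * h01

theorem LdGeq.sum_mul_deriv_neg_of_isLocalMax (h : LdGeq a c L1 L2 L3 L4 Q t x)
    (hsymm : ∀ᶠ y in 𝓝 x, (Q t y).IsSymm) (htr : ∀ᶠ y in 𝓝 x, (Q t y).trace = 0)
    (hC2 : ∀ α, ContDiffAt ℝ 2 (fun y => Q t y 0 α) x)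
    (hmax : IsLocalMax (fun y => ∑ α, Q t y 0 α ^ 2) x) (hζ : 0 < 2 * L1 + L2 + L3)
    (hr : 0 < ∑ α, Q t x 0 α ^ 2)
    (hsmall : 9 * L4 ^ 2 * ∑ α, Q t x 0 α ^ 2 ≤ (2 * L1 + L2 + L3) ^ 2)
    (ha : 0 < a + 2 * c * ∑ α, Q t x 0 α ^ 2) :
    ∑ α, Q t x 0 α * deriv (fun s => Q s x 0 α) t < 0 := by
  rw [h.sum_mul_deriv_eq_ldgRate hsymm htr hC2]
  refine ldgRate_neg hζ (fun k => ?_) (fun v => ?_) hr hsmall ha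
  · have hcrit : pd k (fun y => ∑ α, Q t y 0 α ^ 2) x = 0 := by
      rw [pd, hmax.fderiv_eq_zero, zero_apply]
    rw [pd_sum_sq (fun α => (hC2 α).differentiableAt (by simp)) k] at hcrit
    simp only [Fin.sum_univ_two] at hcrit ⊢
    linarith
  · have hhess l k : pd2 l k (fun y => ∑ α, Q t y 0 α ^ 2) x
        = 2 * halfHessNormSq (fun α => Q t x 0 α) (fun α k => pd k (fun y => Q t y 0 α) x)
          (fun α l k => pd2 l k (fun y => Q t y 0 α) x) l k := by
      rw [pd2_sum_sq hC2, halfHessNormSq, gradGram, Finset.sum_add_distrib]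
    have := hmax.sum_pd2_nonpos (ContDiffAt.sum fun α _ => (hC2 α).pow 2) v
    simp only [hhess] at this
    simp only [Fin.sum_univ_two] at this ⊢
    linarith

end GradientFlow

theorem fnorm_eq_sqrt_of_isSymm_of_trace_eq_zero {M : Matrix (Fin 2) (Fin 2) ℝ} (hs : M.IsSymm)
    (ht : M.trace = 0) : fnorm M = √(2 * ∑ α, M 0 α ^ 2) := by
  have h10 : M 1 0 = M 0 1 := hs.apply 0 1
  have h11 : M 1 1 = -M 0 0 := by rw [Matrix.trace_fin_two] at ht; linarith
  rw [fnorm]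
  congr 1
  simp only [Fin.sum_univ_two, h10, h11]
  ring

theorem ContinuousOn.le_sSup_image_of_mem_closure {X : Type*} [TopologicalSpace X] {s : Set X}
    {f : X → ℝ} (hf : ContinuousOn f (closure s)) (hs : IsCompact (closure s)) {y : X}
    (hy : y ∈ closure s) : f y ≤ sSup (f '' s) := by
  have hbdd : BddAbove (f '' s) :=
    (hs.image_of_continuousOn hf).bddAbove.mono (image_mono subset_closure)
  exact closure_minimal (fun r hr => le_csSup hbdd hr) isClosed_Iic
    (hf.image_closure (mem_image_of_mem f hy))

theorem nine_mul_sq_mul_div_lt {ζ : ℝ} (hζ : ζ ≠ 0) (L : ℝ) :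
    9 * L ^ 2 * (ζ ^ 2 / ((1 + 4 * √2) ^ 2 * L ^ 2)) < ζ ^ 2 := by
  rcases eq_or_ne L 0 with rfl | hL
  · simp only [ne_eq, OfNat.ofNat_ne_zero, not_false_eq_true, zero_pow, mul_zero, zero_mul]
    positivity
  have h : (3 : ℝ) ^ 2 < (1 + 4 * √2) ^ 2 := by
    gcongr
    linarith [Real.one_lt_sqrt_two]
  rw [mul_div_assoc', div_lt_iff₀ (by positivity)]
  nlinarith [mul_lt_mul_of_pos_right h (by positivity : (0 : ℝ) < L ^ 2 * ζ ^ 2)]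

theorem sum_sq_lt_of_sSup_fnorm_lt {Ω : Set E2} (hΩb : Bornology.IsBounded Ω)
    {M : E2 → Matrix (Fin 2) (Fin 2) ℝ} (hM : ContinuousOn M (closure Ω))
    (hsymm : ∀ y ∈ closure Ω, (M y).IsSymm) (htr : ∀ y ∈ closure Ω, (M y).trace = 0) {η : ℝ}
    (hη : sSup ((fun y => fnorm (M y)) '' Ω) < √(2 * η)) :
    ∀ y ∈ closure Ω, ∑ α, M y 0 α ^ 2 < η := by
  have hfnorm y (hy : y ∈ closure Ω) :=
    fnorm_eq_sqrt_of_isSymm_of_trace_eq_zero (hsymm y hy) (htr y hy)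
  have hcont : ContinuousOn (fun y => fnorm (M y)) (closure Ω) := by
    refine ContinuousOn.congr ?_ hfnorm
    exact (continuous_const.mul continuous_id).sqrt.comp_continuousOn (continuousOn_finsetSum _
      fun α _ => (((continuous_apply α).comp (continuous_apply 0)).comp_continuousOn hM).pow 2)
  intro y hy
  have := (hcont.le_sSup_image_of_mem_closure hΩb.isCompact_closure hy).trans_lt hη
  rw [hfnorm y hy, Real.sqrt_lt_sqrt_iff (by positivity)] at this
  linarith

theorem sum_sq_le_of_lt_on_parabolic_boundary {a c L1 L2 L3 L4 T η : ℝ} {Ω : Set E2}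
    (hΩo : IsOpen Ω) (hΩb : Bornology.IsBounded Ω) {Q : ℝ → E2 → Matrix (Fin 2) (Fin 2) ℝ}
    (hζ : 0 < 2 * L1 + L2 + L3) (hη : 9 * L4 ^ 2 * η < (2 * L1 + L2 + L3) ^ 2)
    (hc : 0 < c) (ha : |a| ≤ 2 * c * η)
    (hQcont : ContinuousOn (fun p : ℝ × E2 => Q p.1 p.2) (Icc 0 T ×ˢ closure Ω))
    (hQsymm : ∀ t ∈ Ioo 0 T, ∀ x ∈ Ω, (Q t x).IsSymm)
    (hQtr : ∀ t ∈ Ioo 0 T, ∀ x ∈ Ω, (Q t x).trace = 0)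
    (hQt : ∀ x ∈ Ω, ∀ α, ContDiffOn ℝ 1 (fun s => Q s x 0 α) (Ioo 0 T))
    (hQx : ∀ t ∈ Ioo 0 T, ∀ α, ContDiffOn ℝ 2 (fun y => Q t y 0 α) Ω)
    (hsol : ∀ t ∈ Ioo 0 T, ∀ x ∈ Ω, LdGeq a c L1 L2 L3 L4 Q t x)
    (h0 : ∀ y ∈ closure Ω, ∑ α, Q 0 y 0 α ^ 2 < η)
    (hbd : ∀ t ∈ Ioo 0 T, ∀ y ∈ frontier Ω, ∑ α, Q t y 0 α ^ 2 < η) :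
    ∀ t ∈ Ioo 0 T, ∀ x ∈ Ω, ∑ α, Q t x 0 α ^ 2 ≤ η := by
  intro t ht x hx
  set F : ℝ → E2 → ℝ := fun s y => ∑ α, Q s y 0 α ^ 2
  have hFcont : ContinuousOn (fun p : ℝ × E2 => F p.1 p.2) (Icc 0 T ×ˢ closure Ω) :=
    continuousOn_finsetSum _ fun α _ =>
      (((continuous_apply α).comp (continuous_apply 0)).comp_continuousOn hQcont).pow 2
  by_contra! hbig
  obtain ⟨m', hm', hηm'⟩ : ∃ m', 9 * L4 ^ 2 * m' < (2 * L1 + L2 + L3) ^ 2 ∧ η < m' :=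
    ((((continuous_const_mul _).tendsto η).eventually (gt_mem_nhds hη)).filter_mono
      nhdsWithin_le_nhds |>.and self_mem_nhdsWithin).exists (f := 𝓝[>] η)
  have hm : η < min (F t x) m' := lt_min hbig hηm'
  obtain ⟨t₀, ht₀, x₀, hx₀, hFm, hspace, htime⟩ := exists_first_hitting hΩb.isCompact_closure
    hFcont (fun y hy => (h0 y hy).trans hm) ⟨ht.1.le, ht.2.le⟩ (subset_closure hx)
    (min_le_left _ _)
  have ht₀T : t₀ ∈ Ioo 0 T := ⟨ht₀.1, ht₀.2.trans_lt ht.2⟩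
  have hx₀Ω : x₀ ∈ Ω := by
    by_contra hx₀'
    exact (hbd t₀ ht₀T x₀ ⟨hx₀, by rwa [hΩo.interior_eq]⟩).not_ge (hm.le.trans_eq hFm.symm)
  have hΩx₀ : Ω ∈ 𝓝 x₀ := hΩo.mem_nhds hx₀Ω
  have hF₀ : 0 ≤ F 0 x₀ := by positivity
  have hrate := (hsol t₀ ht₀T x₀ hx₀Ω).sum_mul_deriv_neg_of_isLocalMax
    (eventually_of_mem hΩx₀ (hQsymm t₀ ht₀T)) (eventually_of_mem hΩx₀ (hQtr t₀ ht₀T))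
    (fun α => (hQx t₀ ht₀T α).contDiffAt hΩx₀)
    (hspace.isLocalMax (mem_of_superset hΩx₀ subset_closure)) hζ
    (by linarith [h0 x₀ hx₀]) (by nlinarith [min_le_right (F t x) m'])
    (by nlinarith [neg_abs_le a])
  have hgrowth := (hasDerivAt_sum_sq fun α =>
    ((hQt x₀ hx₀Ω α).differentiableOn one_ne_zero).differentiableAt
      (isOpen_Ioo.mem_nhds ht₀T)).nonneg_of_isMaxOn_Icc ht₀.1 htime
  linarith

theorem preservation_of_smallness_general
    (Ω : Set E2) (hΩo : IsOpen Ω) (hΩb : Bornology.IsBounded Ω)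
    (a c L1 L2 L3 L4 T : ℝ) (hc : 0 < c)
    (h12 : 0 < L1 + L2) (h13 : 0 < L1 + L3)
    (ζ η₁ : ℝ) (hζ : ζ = 2 * L1 + L2 + L3)
    (hη₁ : η₁ = ζ ^ 2 / ((1 + 4 * Real.sqrt 2) ^ 2 * L4 ^ 2))
    (Q : ℝ → E2 → Matrix (Fin 2) (Fin 2) ℝ)
    -- `Q` is continuous on `[0,T] × closure Ω`
    (hQcont : ContinuousOn (fun p : ℝ × E2 => Q p.1 p.2) (Icc 0 T ×ˢ closure Ω))
    -- `Q` takes values in `S^(2)` (symmetric traceless)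
    (hQsymm : ∀ t ∈ Icc (0:ℝ) T, ∀ x ∈ closure Ω, (Q t x).IsSymm)
    (hQtr : ∀ t ∈ Icc (0:ℝ) T, ∀ x ∈ closure Ω, (Q t x).trace = 0)
    -- `Q` is C¹ in `t` and C² in `x` on `(0,T) × Ω`
    (hQt : ∀ x ∈ Ω, ∀ i j : Fin 2, ContDiffOn ℝ 1 (fun s => Q s x i j) (Ioo 0 T))
    (hQx : ∀ t ∈ Ioo (0:ℝ) T, ∀ i j : Fin 2, ContDiffOn ℝ 2 (fun y => Q t y i j) Ω)
    -- `Q` solves the gradient-flow system on `(0,T) × Ω`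
    (hsol : ∀ t ∈ Ioo (0:ℝ) T, ∀ x ∈ Ω, LdGeq a c L1 L2 L3 L4 Q t x)
    -- time-independent Dirichlet boundary condition `Q̃ = Q(0,·)|_{∂Ω}`
    (hbc : ∀ t ∈ Icc (0:ℝ) T, ∀ x ∈ frontier Ω, Q t x = Q 0 x)
    -- smallness of the initial and boundary data
    (hsmall₂ : sSup ((fun x => fnorm (Q 0 x)) '' Ω) < Real.sqrt (2 * η₁))
    -- smallness of the coefficient `a`
    (ha : |a| ≤ 2 * c * η₁) :
    ∀ t ∈ Ioo (0:ℝ) T, ∀ x ∈ Ω, fnorm (Q t x) ≤ Real.sqrt (2 * η₁) := by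
  intro t ht x hx
  subst hζ
  have hT : (0 : ℝ) ∈ Icc 0 T := ⟨le_rfl, ht.1.le.trans ht.2.le⟩
  have hsub : Ioo 0 T ⊆ Icc 0 T := Ioo_subset_Icc_self
  have h0 := sum_sq_lt_of_sSup_fnorm_lt hΩb (hQcont.comp (continuous_const.prodMk
    continuous_id).continuousOn fun y hy => ⟨hT, hy⟩) (hQsymm 0 hT) (hQtr 0 hT) hsmall₂
  have hζ : 0 < 2 * L1 + L2 + L3 := by linarith
  have hle := sum_sq_le_of_lt_on_parabolic_boundary hΩo hΩb hζ
    (hη₁ ▸ nine_mul_sq_mul_div_lt hζ.ne' L4) hc ha hQcont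
    (fun s hs y hy => hQsymm s (hsub hs) y (subset_closure hy))
    (fun s hs y hy => hQtr s (hsub hs) y (subset_closure hy))
    (fun y hy => hQt y hy 0) (fun s hs => hQx s hs 0) hsol h0
    (fun s hs y hy => hbc s (hsub hs) y hy ▸ h0 y (frontier_subset_closure hy)) t ht x hx
  rw [fnorm_eq_sqrt_of_isSymm_of_trace_eq_zero (hQsymm t (hsub ht) x (subset_closure hx))
    (hQtr t (hsub ht) x (subset_closure hx))]
  exact Real.sqrt_le_sqrt (by linarith)

/-- preservation of `L^∞` smallness, Proposition 2.1.
For a smooth solution of the 2D Landau–de Gennes gradient flow on a bounded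
domain with time-independent boundary data, if the initial data is smaller than
`√(2η₁)` in `L^∞` (and dominates the boundary data) and `|a| ≤ 2cη₁`, then the
solution stays bounded by `√(2η₁)` for all time. -/
theorem preservation_of_smallness
    (Ω : Set E2) (hΩo : IsOpen Ω) (hΩb : Bornology.IsBounded Ω)
    (a c L1 L2 L3 L4 T : ℝ) (hc : 0 < c) (hL4 : L4 ≠ 0)
    (h12 : 0 < L1 + L2) (h13 : 0 < L1 + L3) (hT : 0 < T)
    (ζ η₁ : ℝ) (hζ : ζ = 2 * L1 + L2 + L3)
    (hη₁ : η₁ = ζ ^ 2 / ((1 + 4 * Real.sqrt 2) ^ 2 * L4 ^ 2))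
    (Q : ℝ → E2 → Matrix (Fin 2) (Fin 2) ℝ)
    -- `Q` is continuous on `[0,T] × closure Ω`
    (hQcont : ContinuousOn (fun p : ℝ × E2 => Q p.1 p.2) (Icc 0 T ×ˢ closure Ω))
    -- `Q` takes values in `S^(2)` (symmetric traceless)
    (hQsymm : ∀ t ∈ Icc (0:ℝ) T, ∀ x ∈ closure Ω, (Q t x).IsSymm)
    (hQtr : ∀ t ∈ Icc (0:ℝ) T, ∀ x ∈ closure Ω, (Q t x).trace = 0)
    -- `Q` is C¹ in `t` and C² in `x` on `(0,T) × Ω`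
    (hQt : ∀ x ∈ Ω, ∀ i j : Fin 2, ContDiffOn ℝ 1 (fun s => Q s x i j) (Ioo 0 T))
    (hQx : ∀ t ∈ Ioo (0:ℝ) T, ∀ i j : Fin 2, ContDiffOn ℝ 2 (fun y => Q t y i j) Ω)
    -- `Q` solves the gradient-flow system on `(0,T) × Ω`
    (hsol : ∀ t ∈ Ioo (0:ℝ) T, ∀ x ∈ Ω, LdGeq a c L1 L2 L3 L4 Q t x)
    -- time-independent Dirichlet boundary condition `Q̃ = Q(0,·)|_{∂Ω}`
    (hbc : ∀ t ∈ Icc (0:ℝ) T, ∀ x ∈ frontier Ω, Q t x = Q 0 x)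
    -- smallness of the initial and boundary data
    (hsmall₁ : sSup ((fun x => fnorm (Q 0 x)) '' frontier Ω)
        ≤ sSup ((fun x => fnorm (Q 0 x)) '' Ω))
    (hsmall₂ : sSup ((fun x => fnorm (Q 0 x)) '' Ω) < Real.sqrt (2 * η₁))
    -- smallness of the coefficient `a`
    (ha : |a| ≤ 2 * c * η₁) :
    ∀ t ∈ Ioo (0:ℝ) T, ∀ x ∈ Ω, fnorm (Q t x) ≤ Real.sqrt (2 * η₁) :=
  preservation_of_smallness_general Ω hΩo hΩb a c L1 L2 L3 L4 T hc h12 h13 ζ η₁ hζ hη₁ Q hQcont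
    hQsymm hQtr hQt hQx hsol hbc hsmall₂ ha

end
end

section
/- Let 0 < R0 < R1 and let g : [R0,R1] → ℝ be continuously differentiable with g ≥ 0 and g(R0) = g(R1) = 0. Then ∫_{R0}^{R1} g'(r)² g(r) dr ≥ (4π² / (9 (R1 − R0)²)) ∫_{R0}^{R1} g(r)³ dr. -/
/-!
With `v = g³` and `w = (9/4) g'² g` we have `v'² = 4 v w`, i.e. `w = ((√v)')²` where `g > 0`, so the
claim is Wirtinger's inequality `∫ ((√v)')² ≥ (π/L)² ∫ v` for `√v = g^{3/2}`. It is proved without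
differentiating `√v`. Put `c = π/L` and `F = c v cot (c (x - a))`. At `y = c cot (c (x - a))` the
quadratic `v y² - v' y + w`, nonnegative because its discriminant `v'² - 4 v w` is `≤ 0`, equals
`w - c² v - F'`; hence `F b - F a ≤ ∫ (w - c² v)`. Both boundary values vanish: `v' = 0` wherever
`v = 0`, so `v` has a double zero at each end while `sin (c (x - a))` has a simple one.
-/

open MeasureTheory Set intervalIntegral Filter Topology

lemma quadratic_nonneg_of_sq_le_four_mul {A B C : ℝ} (hA : 0 ≤ A) (hC : 0 ≤ C)
    (hB : B ^ 2 ≤ 4 * A * C) (y : ℝ) : 0 ≤ A * y ^ 2 - B * y + C := by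
  rcases hA.eq_or_lt with rfl | hA
  · nlinarith
  · nlinarith [sq_nonneg (2 * A * y - B)]

lemma tendsto_div_of_hasDerivWithinAt_zero {v φ : ℝ → ℝ} {s : Set ℝ} {x₀ d : ℝ}
    (hv : HasDerivWithinAt v 0 s x₀) (hφ : HasDerivWithinAt φ d s x₀) (hd : d ≠ 0)
    (hv₀ : v x₀ = 0) (hφ₀ : φ x₀ = 0) :
    Tendsto (fun x => v x / φ x) (𝓝[s \ {x₀}] x₀) (𝓝 0) := by
  have hslope := (hasDerivWithinAt_iff_tendsto_slope.mp hv).div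
    (hasDerivWithinAt_iff_tendsto_slope.mp hφ) hd
  rw [zero_div] at hslope
  refine hslope.congr' ?_
  filter_upwards [self_mem_nhdsWithin] with x hx
  have hx₀ : x - x₀ ≠ 0 := sub_ne_zero.mpr hx.2
  simp only [Pi.div_apply, slope_def_field, hv₀, hφ₀, sub_zero,
    div_div_div_cancel_right₀ hx₀]

lemma continuousWithinAt_mul_cos_div_sin {v θ : ℝ → ℝ} {s : Set ℝ} {x₀ d : ℝ}
    (hv : HasDerivWithinAt v 0 s x₀) (hv₀ : v x₀ = 0) (hθ : HasDerivAt θ d x₀) (hd : d ≠ 0)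
    (hsin : Real.sin (θ x₀) = 0) :
    ContinuousWithinAt (fun x => v x * Real.cos (θ x) / Real.sin (θ x)) s x₀ := by
  have hcos : Real.cos (θ x₀) ≠ 0 := by
    rcases Real.sin_eq_zero_iff_cos_eq.mp hsin with h | h <;> simp [h]
  have hquot := tendsto_div_of_hasDerivWithinAt_zero hv hθ.sin.hasDerivWithinAt
    (mul_ne_zero hcos hd) hv₀ hsin
  have hcos_lim : Tendsto (fun x => Real.cos (θ x)) (𝓝[s \ {x₀}] x₀) (𝓝 (Real.cos (θ x₀))) :=
    (Real.continuous_cos.tendsto _).comp hθ.continuousAt.continuousWithinAt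
  rw [← continuousWithinAt_sdiff_self, ContinuousWithinAt, hv₀, zero_mul, zero_div]
  simpa only [mul_div_right_comm, zero_mul] using hquot.mul hcos_lim

lemma hasDerivAt_mul_cos_div_sin {v θ : ℝ → ℝ} {x v'x d : ℝ} (hv : HasDerivAt v v'x x)
    (hθ : HasDerivAt θ d x) (hsin : Real.sin (θ x) ≠ 0) :
    HasDerivAt (fun x => v x * Real.cos (θ x) / Real.sin (θ x))
      (v'x * Real.cos (θ x) / Real.sin (θ x) - d * v x / Real.sin (θ x) ^ 2) x := by
  refine ((hv.mul hθ.cos).div hθ.sin hsin).congr_deriv ?_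
  simp only [Pi.mul_apply]
  field_simp
  linear_combination (-d * v x) * Real.sin_sq_add_cos_sq (θ x)

lemma mul_cos_div_sin_sub_le {A B C : ℝ} (hA : 0 ≤ A) (hC : 0 ≤ C) (hB : B ^ 2 ≤ 4 * A * C)
    (c : ℝ) {t : ℝ} (hsin : Real.sin t ≠ 0) :
    c * (B * Real.cos t / Real.sin t - c * A / Real.sin t ^ 2) ≤ C - c ^ 2 * A := by
  have hquad := quadratic_nonneg_of_sq_le_four_mul hA hC hB (c * Real.cos t / Real.sin t)
  have hgap : C - c ^ 2 * A - c * (B * Real.cos t / Real.sin t - c * A / Real.sin t ^ 2) =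
      A * (c * Real.cos t / Real.sin t) ^ 2 - B * (c * Real.cos t / Real.sin t) + C := by
    field_simp
    linear_combination -(c ^ 2 * A) * Real.sin_sq_add_cos_sq t
  linarith

theorem wirtinger_of_sq_deriv_le_four_mul {a b : ℝ} (hab : a < b) {v v' w : ℝ → ℝ}
    (hv : ∀ x ∈ Icc a b, HasDerivWithinAt v (v' x) (Icc a b) x)
    (hw : ContinuousOn w (Icc a b))
    (hv_nonneg : ∀ x ∈ Icc a b, 0 ≤ v x) (hw_nonneg : ∀ x ∈ Icc a b, 0 ≤ w x)
    (hva : v a = 0) (hvb : v b = 0)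
    (hsq : ∀ x ∈ Icc a b, v' x ^ 2 ≤ 4 * v x * w x) :
    (Real.pi / (b - a)) ^ 2 * ∫ x in a..b, v x ≤ ∫ x in a..b, w x := by
  set c := Real.pi / (b - a)
  have hc : 0 < c := div_pos Real.pi_pos (sub_pos.mpr hab)
  have hcπ : c * (b - a) = Real.pi := div_mul_cancel₀ _ (sub_pos.mpr hab).ne'
  clear_value c
  have hv_cont : ContinuousOn v (Icc a b) := fun x hx => (hv x hx).continuousWithinAt
  have hθ (x : ℝ) : HasDerivAt (fun x => c * (x - a)) c x := by
    simpa using ((hasDerivAt_id x).sub_const a).const_mul c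
  have hsin_ne {x : ℝ} (hx : x ∈ Ioo a b) : Real.sin (c * (x - a)) ≠ 0 := by
    refine (Real.sin_pos_of_pos_of_lt_pi (mul_pos hc (sub_pos.mpr hx.1)) ?_).ne'
    rw [← hcπ]
    exact mul_lt_mul_of_pos_left (by linarith [hx.2]) hc
  have hF_deriv {x : ℝ} (hx : x ∈ Ioo a b) :=
    (hasDerivAt_mul_cos_div_sin ((hv x (Ioo_subset_Icc_self hx)).hasDerivAt
      (Icc_mem_nhds hx.1 hx.2)) (hθ x) (hsin_ne hx)).const_mul c
  have hderiv_zero {x : ℝ} (hx : x ∈ Icc a b) (hvx : v x = 0) :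
      HasDerivWithinAt v 0 (Icc a b) x := by
    have hv'x : v' x ^ 2 ≤ 0 := by simpa [hvx] using hsq x hx
    have hv'x_zero : v' x = 0 := pow_eq_zero_iff two_ne_zero |>.mp (le_antisymm hv'x (sq_nonneg _))
    simpa [hv'x_zero] using hv x hx
  have hF_cont : ContinuousOn
      (fun x => c * (v x * Real.cos (c * (x - a)) / Real.sin (c * (x - a)))) (Icc a b) := by
    intro x hx
    rcases hx.1.eq_or_lt with rfl | hax
    · exact (continuousWithinAt_mul_cos_div_sin (hderiv_zero hx hva) hva (hθ _) hc.ne'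
        (by simp)).const_mul c
    rcases hx.2.eq_or_lt with rfl | hxb
    · exact (continuousWithinAt_mul_cos_div_sin (hderiv_zero hx hvb) hvb (hθ _) hc.ne'
        (by rw [hcπ, Real.sin_pi])).const_mul c
    · exact (hF_deriv ⟨hax, hxb⟩).continuousAt.continuousWithinAt
  have hFTC := sub_le_integral_of_hasDeriv_right_of_le hab.le hF_cont
    (fun x hx => (hF_deriv hx).hasDerivWithinAt) (φ := fun x => w x - c ^ 2 * v x)
    ((hw.sub (continuousOn_const.mul hv_cont)).integrableOn_Icc)
    (fun x hx => mul_cos_div_sin_sub_le (hv_nonneg x (Ioo_subset_Icc_self hx))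
      (hw_nonneg x (Ioo_subset_Icc_self hx)) (hsq x (Ioo_subset_Icc_self hx)) c (hsin_ne hx))
  simp only [hva, hvb, zero_mul, zero_div, mul_zero, sub_zero] at hFTC
  rw [integral_sub (hw.intervalIntegrable_of_Icc hab.le)
    ((hv_cont.intervalIntegrable_of_Icc hab.le).const_mul _),
    intervalIntegral.integral_const_mul] at hFTC
  linarith

theorem poincare_cubed_general
    (R0 R1 : ℝ) (hR : R0 < R1)
    (g g' : ℝ → ℝ)
    (hderiv : ∀ r ∈ Icc R0 R1, HasDerivWithinAt g (g' r) (Icc R0 R1) r)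
    (hg'cont : ContinuousOn g' (Icc R0 R1))
    (hgpos : ∀ r ∈ Icc R0 R1, 0 ≤ g r)
    (hgR0 : g R0 = 0) (hgR1 : g R1 = 0) :
    (∫ r in R0..R1, (g' r) ^ 2 * g r)
      ≥ 4 * Real.pi ^ 2 / (9 * (R1 - R0) ^ 2) * ∫ r in R0..R1, (g r) ^ 3 := by
  have hg_cont : ContinuousOn g (Icc R0 R1) := fun r hr => (hderiv r hr).continuousWithinAt
  have hwirtinger := wirtinger_of_sq_deriv_le_four_mul hR (v := fun r => g r ^ 3)
    (v' := fun r => 3 * g r ^ 2 * g' r) (w := fun r => 9 / 4 * (g' r ^ 2 * g r))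
    (fun r hr => by simpa using (hderiv r hr).fun_pow 3)
    (continuousOn_const.mul ((hg'cont.pow 2).mul hg_cont))
    (fun r hr => pow_nonneg (hgpos r hr) 3)
    (fun r hr => by have := hgpos r hr; positivity)
    (by simp [hgR0]) (by simp [hgR1]) (fun r _ => le_of_eq (by ring))
  rw [intervalIntegral.integral_const_mul] at hwirtinger
  have hcoeff : 4 * Real.pi ^ 2 / (9 * (R1 - R0) ^ 2) = 4 / 9 * (Real.pi / (R1 - R0)) ^ 2 := by
    rw [div_pow]; field_simp
  rw [hcoeff, mul_assoc]
  linarith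

/-- a Poincaré-type inequality used in the blow-up proof:
for `g : [R0,R1] → ℝ` continuously differentiable, nonnegative, vanishing at
the endpoints, `∫ g'² g ≥ (4π²/(9(R1−R0)²)) ∫ g³`. -/
theorem poincare_cubed
    (R0 R1 : ℝ) (hR0 : 0 < R0) (hR : R0 < R1)
    (g g' : ℝ → ℝ)
    (hderiv : ∀ r ∈ Icc R0 R1, HasDerivWithinAt g (g' r) (Icc R0 R1) r)
    (hg'cont : ContinuousOn g' (Icc R0 R1))
    (hgpos : ∀ r ∈ Icc R0 R1, 0 ≤ g r)
    (hgR0 : g R0 = 0) (hgR1 : g R1 = 0) :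
    (∫ r in R0..R1, (g' r) ^ 2 * g r)
      ≥ 4 * Real.pi ^ 2 / (9 * (R1 - R0) ^ 2) * ∫ r in R0..R1, (g r) ^ 3 :=
  poincare_cubed_general R0 R1 hR g g' hderiv hg'cont hgpos hgR0 hgR1
end

section
/- Let a < 0, b ∈ ℝ, c > 0, and let Q : [0,∞) → M₂(ℝ) be differentiable with Q(t) symmetric and traceless for every t, satisfying Q'(t) = −a Q(t) + b( Q(t)² − (tr(Q(t)²)/2) I ) − c tr(Q(t)²) Q(t). If |Q(0)| ≤ √(−a/c), then |Q(t)| ≤ √(−a/c) for all t ≥ 0. -/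
open Set

/-! For a traceless `2 × 2` matrix, Cayley–Hamilton gives `Q² = (tr Q² / 2) • 1`, so the `b`-term
of the bulk ODE vanishes and the flow is radial, `Q' = (-a - c |Q|²) • Q`. Hence `y = |Q|²` solves
the logistic equation `y' = 2 (-a - c y) y`, whose right-hand side is negative above `-a / c`, and
a barrier argument keeps `y ≤ -a / c`. -/

theorem Matrix.mul_self_eq_smul_one_of_trace_eq_zero {R : Type*} [Field R] [NeZero (2 : R)]
    (A : Matrix (Fin 2) (Fin 2) R) (hA : A.trace = 0) : A * A = ((A * A).trace / 2) • 1 := by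
  rw [trace_fin_two] at hA
  have hd : A 1 1 = -A 0 0 := by linear_combination hA
  ext i j
  fin_cases i <;> fin_cases j <;>
    simp [mul_apply, Fin.sum_univ_two, trace_fin_two, hd] <;> field_simp <;> ring

theorem hasDerivWithinAt_trace_mul_self {n : Type*} [Fintype n]
    {Q : ℝ → Matrix n n ℝ} {Q' : Matrix n n ℝ} {s : Set ℝ} {t : ℝ}
    (hQ : ∀ i j, HasDerivWithinAt (fun u => Q u i j) (Q' i j) s t) :
    HasDerivWithinAt (fun u => (Q u * Q u).trace) (Q t * Q' + Q' * Q t).trace s t := by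
  simp only [Matrix.trace, Matrix.diag, Matrix.mul_apply, Matrix.add_apply, ← Finset.sum_add_distrib]
  exact HasDerivWithinAt.fun_sum fun i _ => HasDerivWithinAt.fun_sum fun j _ =>
    ((hQ i j).mul (hQ j i)).congr_deriv (by ring)

theorem image_le_of_deriv_neg_above {y y' : ℝ → ℝ} {t₀ M : ℝ}
    (hy : ∀ t, t₀ ≤ t → HasDerivWithinAt y (y' t) (Ici t₀) t)
    (hneg : ∀ t, t₀ ≤ t → M < y t → y' t < 0) (h₀ : y t₀ ≤ M) :
    ∀ t, t₀ ≤ t → y t ≤ M := by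
  intro t ht
  refine le_of_forall_pos_le_add fun ε hε => ?_
  refine image_le_of_deriv_right_lt_deriv_boundary (B := fun _ => M + ε) (B' := 0)
    (fun s hs => (hy s hs.1).continuousWithinAt.mono Icc_subset_Ici_self)
    (fun s hs => (hy s hs.1).mono (Ici_subset_Ici.mpr hs.1))
    (by linarith) (fun _ => hasDerivAt_const _ _)
    (fun s hs hys => hneg s hs.1 (by linarith)) ⟨ht, le_rfl⟩

theorem bulk_rhs_apply_eq_smul_of_trace_eq_zero (a b c : ℝ) (Q : Matrix (Fin 2) (Fin 2) ℝ)
    (hQ : Q.trace = 0) (i j : Fin 2) :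
    -a * Q i j + b * ((Q * Q) i j - (Q * Q).trace / 2 * (if i = j then 1 else 0))
      - c * (Q * Q).trace * Q i j = ((-a - c * (Q * Q).trace) • Q) i j := by
  have hsq := congrFun₂ (Q.mul_self_eq_smul_one_of_trace_eq_zero hQ) i j
  rw [Matrix.smul_apply, Matrix.one_apply, smul_eq_mul] at hsq
  rw [hsq, Matrix.smul_apply, smul_eq_mul]
  ring

theorem bulk_ode_ball_preservation_2d_neg_general
    (a b c : ℝ) (ha : a < 0) (hc : 0 < c)
    (Q : ℝ → Matrix (Fin 2) (Fin 2) ℝ)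
    (htr : ∀ t, (Q t).trace = 0)
    (hode : ∀ t, 0 ≤ t → ∀ i j : Fin 2,
      HasDerivWithinAt (fun s => Q s i j)
        (-a * Q t i j
          + b * ((Q t * Q t) i j - (Q t * Q t).trace / 2 * (if i = j then 1 else 0))
          - c * (Q t * Q t).trace * Q t i j)
        (Ici 0) t)
    (hinit : Real.sqrt ((Q 0 * Q 0).trace) ≤ Real.sqrt (-a / c)) :
    ∀ t, 0 ≤ t → Real.sqrt ((Q t * Q t).trace) ≤ Real.sqrt (-a / c) := by
  set y := fun t => (Q t * Q t).trace
  have hM : 0 ≤ -a / c := div_nonneg (neg_nonneg.mpr ha.le) hc.le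
  have hy : ∀ t, 0 ≤ t → HasDerivWithinAt y (2 * ((-a - c * y t) * y t)) (Ici 0) t := by
    intro t ht
    have hQ := hasDerivWithinAt_trace_mul_self fun i j => by
      simpa only [bulk_rhs_apply_eq_smul_of_trace_eq_zero a b c _ (htr t)] using hode t ht i j
    convert hQ using 1
    simp only [Matrix.mul_smul, Matrix.smul_mul, Matrix.trace_add, Matrix.trace_smul, smul_eq_mul, y]
    ring
  have hneg : ∀ t, 0 ≤ t → -a / c < y t → 2 * ((-a - c * y t) * y t) < 0 := by
    intro t _ hlt
    have hpos : 0 < y t := hM.trans_lt hlt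
    have hrate : -a - c * y t < 0 := by rw [div_lt_iff₀ hc] at hlt; linarith
    linarith [mul_neg_of_neg_of_pos hrate hpos]
  intro t ht
  exact Real.sqrt_le_sqrt <|
    image_le_of_deriv_neg_above hy hneg ((Real.sqrt_le_sqrt_iff hM).mp hinit) t ht

/-- 2D bulk ODE, preservation of the physicality ball for
`a < 0`: if `|Q(0)| ≤ √(−a/c)` then `|Q(t)| ≤ √(−a/c)` for all `t ≥ 0`, where
`|Q| = √(tr Q²)` is the Frobenius norm. -/
theorem bulk_ode_ball_preservation_2d_neg
    (a b c : ℝ) (ha : a < 0) (hc : 0 < c)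
    (Q : ℝ → Matrix (Fin 2) (Fin 2) ℝ)
    (hsym : ∀ t, (Q t).IsSymm) (htr : ∀ t, (Q t).trace = 0)
    (hode : ∀ t, 0 ≤ t → ∀ i j : Fin 2,
      HasDerivWithinAt (fun s => Q s i j)
        (-a * Q t i j
          + b * ((Q t * Q t) i j - (Q t * Q t).trace / 2 * (if i = j then 1 else 0))
          - c * (Q t * Q t).trace * Q t i j)
        (Ici 0) t)
    (hinit : Real.sqrt ((Q 0 * Q 0).trace) ≤ Real.sqrt (-a / c)) :
    ∀ t, 0 ≤ t → Real.sqrt ((Q t * Q t).trace) ≤ Real.sqrt (-a / c) :=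
  bulk_ode_ball_preservation_2d_neg_general a b c ha hc Q htr hode hinit
end

section
/- Let a ∈ ℝ, b ≥ 0, c > 0 with b² − 24ac ≥ 0 and |a| < b²/(3c), and set s₊ = (b + √(b² − 24ac))/(4c). Let Q : [0,∞) → M₃(ℝ) be differentiable with Q(t) symmetric and traceless for every t, satisfying the ODE Q'(t) = −a Q(t) + b( Q(t)² − (tr(Q(t)²)/3) I ) − c tr(Q(t)²) Q(t). If every eigenvalue of Q(0) lies in the interval [−s₊/3, 2s₊/3], then for every t ≥ 0, every eigenvalue of Q(t) lies in [−s₊/3, 2s₊/3]. -/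
/-!
Let `m(t)` be the smallest eigenvalue of `Q(t)` and `r(t) = tr(Q(t)²)`. For a unit eigenvector `w`
of `Q(z)` for `m(z)`, the Rayleigh principle gives `m(z) - m(x) ≥ w·(Q(z) - Q(x))w`, while
`w·F(Q(z))w = -a m + b (m² - r/3) - c r m` for the bulk field `F`; hence the lower right Dini
derivative of `m` is at least this rate. Tracelessness gives `r ≤ 6 m²`, and since `s/3` is a root
of `u ↦ a u - b u² + 6 c u³`, the rate at `m = -s/3 - F` exceeds `-K F` for small `F > 0`.
Comparison with the barriers `-s/3 - ε e^{Kt}` keeps `m ≥ -s/3`, and as the eigenvalues sum to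
zero, each of them is then at most `2s/3`.
-/

open Set Filter Topology

namespace Matrix

lemma tendsto_slope_of_hasDerivWithinAt {m n : Type*} {Q : ℝ → Matrix m n ℝ} {D : Matrix m n ℝ}
    {s : Set ℝ} {x : ℝ} (hQ : ∀ i j, HasDerivWithinAt (fun t => Q t i j) (D i j) s x) :
    Tendsto (slope Q x) (𝓝[s \ {x}] x) (𝓝 D) :=
  tendsto_pi_nhds.2 fun i => tendsto_pi_nhds.2 fun j =>
    hasDerivWithinAt_iff_tendsto_slope.mp (hQ i j)

variable {n : Type*} [Fintype n]

lemma abs_dotProduct_mulVec_le {v : n → ℝ} (hv : v ⬝ᵥ v = 1) (M : Matrix n n ℝ) :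
    |v ⬝ᵥ (M *ᵥ v)| ≤ ∑ i, ∑ j, |M i j| := by
  have hcoord : ∀ i, |v i| ≤ 1 := fun i => by
    have : v i ^ 2 ≤ 1 := hv ▸ by
      simpa [dotProduct, sq] using Finset.single_le_sum (f := fun j => v j * v j)
        (fun j _ => mul_self_nonneg _) (Finset.mem_univ i)
    exact (sq_le_one_iff_abs_le_one _).mp this
  calc |v ⬝ᵥ (M *ᵥ v)| = |∑ i, ∑ j, v i * M i j * v j| := by
        simp only [dotProduct, mulVec, Finset.mul_sum, mul_assoc]
    _ ≤ ∑ i, ∑ j, |v i * M i j * v j| :=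
        (Finset.abs_sum_le_sum_abs _ _).trans
          (Finset.sum_le_sum fun i _ => Finset.abs_sum_le_sum_abs _ _)
    _ ≤ ∑ i, ∑ j, |M i j| := by
        refine Finset.sum_le_sum fun i _ => Finset.sum_le_sum fun j _ => ?_
        rw [abs_mul, abs_mul]
        calc |v i| * |M i j| * |v j| ≤ 1 * |M i j| * 1 := by gcongr <;> exact hcoord _
          _ = |M i j| := by ring

variable [DecidableEq n] {A B : Matrix n n ℝ}

namespace IsHermitian

noncomputable def minEigenvalue (hA : A.IsHermitian) : ℝ := ⨅ i, hA.eigenvalues i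

lemma minEigenvalue_le (hA : A.IsHermitian) (i : n) : hA.minEigenvalue ≤ hA.eigenvalues i :=
  ciInf_le (finite_range _).bddBelow i

lemma exists_eigenvalues_eq_minEigenvalue [Nonempty n] (hA : A.IsHermitian) :
    ∃ i, hA.eigenvalues i = hA.minEigenvalue :=
  exists_eq_ciInf_of_finite

lemma posSemidef_sub_smul_one (hA : A.IsHermitian) {μ : ℝ} (hμ : ∀ i, μ ≤ hA.eigenvalues i) :
    (A - μ • 1).PosSemidef := by
  have hdiag : A - μ • 1 = Unitary.conjStarAlgAut ℝ _ hA.eigenvectorUnitary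
      (diagonal fun i => hA.eigenvalues i - μ) := by
    conv_lhs => rw [hA.spectral_theorem]
    rw [← diagonal_sub, map_sub, ← smul_one_eq_diagonal, map_smul, map_one]
    rfl
  rw [hdiag, Unitary.conjStarAlgAut_apply,
    IsUnit.posSemidef_star_right_conjugate_iff Unitary.isUnit_coe, posSemidef_diagonal_iff]
  exact fun i => sub_nonneg.mpr (hμ i)

lemma minEigenvalue_mul_dotProduct_le (hA : A.IsHermitian) (v : n → ℝ) :
    hA.minEigenvalue * (v ⬝ᵥ v) ≤ v ⬝ᵥ (A *ᵥ v) := by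
  have := (hA.posSemidef_sub_smul_one hA.minEigenvalue_le).dotProduct_mulVec_nonneg v
  rwa [star_trivial, sub_mulVec, smul_mulVec, one_mulVec, dotProduct_sub, dotProduct_smul,
    smul_eq_mul, sub_nonneg] at this

lemma exists_mulVec_eq_minEigenvalue_smul [Nonempty n] (hA : A.IsHermitian) :
    ∃ v : n → ℝ, v ⬝ᵥ v = 1 ∧ A *ᵥ v = hA.minEigenvalue • v := by
  obtain ⟨i, hi⟩ := hA.exists_eigenvalues_eq_minEigenvalue
  refine ⟨hA.eigenvectorBasis i, ?_, hi ▸ hA.mulVec_eigenvectorBasis i⟩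
  have h := hA.eigenvectorBasis.orthonormal.1 i
  rwa [← pow_eq_one_iff_of_nonneg (norm_nonneg _) two_ne_zero, ← real_inner_self_eq_norm_sq,
    EuclideanSpace.inner_eq_star_dotProduct, star_trivial] at h

lemma dotProduct_sub_mulVec_le_minEigenvalue_sub (hA : A.IsHermitian) (hB : B.IsHermitian)
    {w : n → ℝ} (hw : w ⬝ᵥ w = 1) (hBw : B *ᵥ w = hB.minEigenvalue • w) :
    w ⬝ᵥ ((B - A) *ᵥ w) ≤ hB.minEigenvalue - hA.minEigenvalue := by
  have hA_le := hA.minEigenvalue_mul_dotProduct_le w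
  rw [sub_mulVec, dotProduct_sub, hBw, dotProduct_smul, smul_eq_mul, hw] at *
  linarith

lemma minEigenvalue_le_add [Nonempty n] (hA : A.IsHermitian) (hB : B.IsHermitian) :
    hA.minEigenvalue ≤ hB.minEigenvalue + ∑ i, ∑ j, |A i j - B i j| := by
  obtain ⟨w, hw, hBw⟩ := hB.exists_mulVec_eq_minEigenvalue_smul
  have h := hA.dotProduct_sub_mulVec_le_minEigenvalue_sub hB hw hBw
  have hbound := (abs_le.mp (abs_dotProduct_mulVec_le hw (B - A))).1
  simp only [sub_apply, abs_sub_comm (B _ _)] at hbound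
  linarith

lemma trace_mul_self_eq_sum_sq (hA : A.IsHermitian) :
    (A * A).trace = ∑ i, hA.eigenvalues i ^ 2 := by
  conv_lhs => rw [hA.spectral_theorem, ← map_mul, Unitary.conjStarAlgAut_apply,
    trace_mul_cycle, Unitary.coe_star_mul_self, one_mul, diagonal_mul_diagonal, trace_diagonal]
  simp [sq]

lemma trace_mul_self_le_of_trace_eq_zero (hA : A.IsHermitian) (htr : A.trace = 0) :
    (A * A).trace ≤ Fintype.card n * (Fintype.card n - 1) * hA.minEigenvalue ^ 2 := by
  have hsum : ∑ i, hA.eigenvalues i = 0 := by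
    simpa [htr] using hA.trace_eq_sum_eigenvalues.symm
  have h := Finset.sum_sq_le_sq_sum_of_nonneg (s := Finset.univ)
    (fun i _ => sub_nonneg.mpr (hA.minEigenvalue_le i))
  simp only [sub_sq, Finset.sum_add_distrib, Finset.sum_sub_distrib, ← Finset.sum_mul,
    ← Finset.mul_sum, hsum, Finset.sum_const, Finset.card_univ, nsmul_eq_mul] at h
  rw [hA.trace_mul_self_eq_sum_sq]
  nlinarith

lemma eigenvalues_le_of_trace_eq_zero (hA : A.IsHermitian) (htr : A.trace = 0) (i : n) :
    hA.eigenvalues i ≤ -((Fintype.card n - 1) * hA.minEigenvalue) := by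
  have hsum : ∑ j, hA.eigenvalues j = 0 := by
    simpa [htr] using hA.trace_eq_sum_eigenvalues.symm
  rw [← Finset.add_sum_erase _ _ (Finset.mem_univ i)] at hsum
  have := Finset.card_nsmul_le_sum _ _ _
    fun j (_ : j ∈ Finset.univ.erase i) => hA.minEigenvalue_le j
  rw [Finset.card_erase_of_mem (Finset.mem_univ i), Finset.card_univ, nsmul_eq_mul,
    Nat.cast_sub (Fintype.card_pos_iff.mpr ⟨i⟩)] at this
  push_cast at this
  linarith

end IsHermitian

lemma continuousWithinAt_minEigenvalue [Nonempty n] {X : Type*} [TopologicalSpace X]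
    {Q : X → Matrix n n ℝ} (hQ : ∀ x, (Q x).IsHermitian) {s : Set X} {x : X}
    (hQx : ContinuousWithinAt Q s x) :
    ContinuousWithinAt (fun y => (hQ y).minEigenvalue) s x := by
  have hdist : Tendsto (fun y => ∑ i, ∑ j, |Q y i j - Q x i j|) (𝓝[s] x) (𝓝 0) := by
    have hcont : Continuous fun M : Matrix n n ℝ => ∑ i, ∑ j, |M i j - Q x i j| := by fun_prop
    simpa [Function.comp_def] using (hcont.tendsto (Q x)).comp hQx
  refine tendsto_iff_norm_sub_tendsto_zero.mpr
    (squeeze_zero (fun _ => norm_nonneg _) (fun y => ?_) hdist)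
  have h₁ := (hQ y).minEigenvalue_le_add (hQ x)
  have h₂ := (hQ x).minEigenvalue_le_add (hQ y)
  simp only [abs_sub_comm (Q x _ _)] at h₂
  rw [Real.norm_eq_abs, abs_sub_le_iff]
  constructor <;> linarith

end Matrix

theorem nonpos_of_liminf_slope_right_lt_mul {f f' : ℝ → ℝ} {a b K η : ℝ} (hη : 0 < η)
    (hf : ContinuousOn f (Icc a b))
    (hf' : ∀ x ∈ Ico a b, ∀ r, f' x < r → ∃ᶠ z in 𝓝[>] x, slope f x z < r)
    (ha : f a ≤ 0) (bound : ∀ x ∈ Ico a b, 0 < f x → f x ≤ η → f' x < K * f x) :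
    ∀ ⦃x⦄, x ∈ Icc a b → f x ≤ 0 := by
  intro x hx
  by_contra! hfx
  set ε := min (f x) η / 2 * Real.exp (-(|K| * (b - a)))
  have hε : 0 < ε := by positivity
  have hexp : ∀ y ∈ Icc a b, ε * Real.exp (K * (y - a)) ≤ min (f x) η / 2 := by
    intro y hy
    calc ε * Real.exp (K * (y - a))
        ≤ ε * Real.exp (|K| * (b - a)) := by
          gcongr ε * Real.exp ?_
          exact mul_le_mul (le_abs_self K) (by linarith [hy.2]) (by linarith [hy.1])
            (abs_nonneg K)
      _ = min (f x) η / 2 := by rw [mul_assoc, ← Real.exp_add]; simp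
  have hB : ∀ y, HasDerivAt (fun y => ε * Real.exp (K * (y - a)))
      (K * (ε * Real.exp (K * (y - a)))) y := fun y => by
    have := (((hasDerivAt_id y).sub_const a).const_mul K).exp.const_mul ε
    simp only [id, mul_one] at this
    exact this.congr_deriv (by ring)
  have hle := image_le_of_liminf_slope_right_lt_deriv_boundary' hf hf'
    (B := fun y => ε * Real.exp (K * (y - a))) (by simpa using ha.trans hε.le)
    (fun y _ => (hB y).continuousAt.continuousWithinAt) (fun y _ => (hB y).hasDerivWithinAt)
    (fun y hy hfy => by
      have hpos : 0 < f y := hfy ▸ by positivity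
      have hη' : f y ≤ η := hfy ▸ (hexp y (Ico_subset_Icc_self hy)).trans (by
        linarith [min_le_right (f x) η])
      exact hfy ▸ bound y hy hpos hη') hx
  linarith [hexp x hx, min_le_left (f x) η]

open Matrix

noncomputable def bulkField (a b c : ℝ) (A : Matrix (Fin 3) (Fin 3) ℝ) :
    Matrix (Fin 3) (Fin 3) ℝ :=
  -a • A + b • (A * A - ((A * A).trace / 3) • 1) - (c * (A * A).trace) • A

noncomputable def bulkRate (a b c μ r : ℝ) : ℝ := -a * μ + b * (μ ^ 2 - r / 3) - c * r * μ

lemma bulkField_apply (a b c : ℝ) (A : Matrix (Fin 3) (Fin 3) ℝ) (i j : Fin 3) :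
    bulkField a b c A i j = -a * A i j
      + b * ((A * A) i j - (A * A).trace / 3 * (if i = j then 1 else 0))
      - c * (A * A).trace * A i j := by
  simp [bulkField, Matrix.one_apply]

lemma continuous_bulkField (a b c : ℝ) : Continuous (bulkField a b c) := by
  unfold bulkField
  fun_prop

lemma dotProduct_bulkField_mulVec {a b c μ : ℝ} {A : Matrix (Fin 3) (Fin 3) ℝ} {v : Fin 3 → ℝ}
    (hv : v ⬝ᵥ v = 1) (hAv : A *ᵥ v = μ • v) :
    v ⬝ᵥ (bulkField a b c A *ᵥ v) = bulkRate a b c μ (A * A).trace := by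
  have hAAv : (A * A) *ᵥ v = μ ^ 2 • v := by
    rw [← mulVec_mulVec, hAv, mulVec_smul, hAv, smul_smul, sq]
  simp only [bulkField, bulkRate, sub_mulVec, add_mulVec, smul_mulVec, one_mulVec, hAv, hAAv,
    dotProduct_sub, dotProduct_add, dotProduct_smul, smul_eq_mul, hv]
  ring

theorem neg_bulkRate_lt {a b c s μ r : ℝ} (hb : 0 ≤ b) (hc : 0 < c) (hs : 0 ≤ s)
    (hs_root : 2 * c * s ^ 2 - b * s + 3 * a = 0) (ha : -(b ^ 2 / (3 * c)) < a)
    (hμ : 0 < -μ - s / 3) (hμ₁ : -μ - s / 3 ≤ 1) (hr : 0 ≤ r) (hr₆ : r ≤ 6 * μ ^ 2) :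
    -bulkRate a b c μ r < (2 * |a| + b + 1) * (-μ - s / 3) := by
  set F := -μ - s / 3
  have hμF : μ = -(s / 3) - F := by ring
  have hrate : bulkRate a b c μ r = -a * μ + b * μ ^ 2 - r * (b / 3 + c * μ) := by
    unfold bulkRate; ring
  rcases le_or_gt (b / 3 + c * μ) 0 with hcoef | hcoef
  · -- here `-μ ≥ b / (3c)`, so `-a μ + b μ² = -μ (a - b μ) > 0`
    have hbμ : b ^ 2 / (3 * c) ≤ -(b * μ) := by
      rw [div_le_iff₀ (by positivity)]
      nlinarith
    have : 0 < -μ * (a - b * μ) := mul_pos (by linarith) (by linarith)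
    have : 0 ≤ r * -(b / 3 + c * μ) := mul_nonneg hr (by linarith)
    nlinarith [abs_nonneg a]
  · -- the rate is smallest at `r = 6 μ²`, where `hs_root` makes it divisible by `F`
    have hroot : -a * μ + b * μ ^ 2 - 6 * μ ^ 2 * (b / 3 + c * μ)
        = F * (-2 * a + b * s / 3 - b * F + 6 * c * s * F + 6 * c * F ^ 2) := by
      rw [hμF]; linear_combination (s / 9 + F) * hs_root
    have hr_term : r * (b / 3 + c * μ) ≤ 6 * μ ^ 2 * (b / 3 + c * μ) := by gcongr
    have : F * (-(2 * |a| + b + 1))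
        < F * (-2 * a + b * s / 3 - b * F + 6 * c * s * F + 6 * c * F ^ 2) := by
      gcongr
      nlinarith [neg_abs_le a, le_abs_self a, mul_nonneg hs hμ.le]
    nlinarith

lemma eventually_lt_slope_minEigenvalue {a b c x p : ℝ} {Q : ℝ → Matrix (Fin 3) (Fin 3) ℝ}
    (hQ : ∀ t, (Q t).IsHermitian)
    (hQ' : ∀ i j, HasDerivWithinAt (fun t => Q t i j) (bulkField a b c (Q x) i j) (Ici x) x)
    (hp : p < bulkRate a b c (hQ x).minEigenvalue (Q x * Q x).trace) :
    ∀ᶠ z in 𝓝[>] x, p < slope (fun t => (hQ t).minEigenvalue) x z := by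
  set m := fun t => (hQ t).minEigenvalue
  set err := fun z => ∑ i, ∑ j, |(slope Q x z - bulkField a b c (Q z)) i j|
  have hQc : ContinuousWithinAt Q (Ioi x) x :=
    (continuousWithinAt_pi.2 fun i => continuousWithinAt_pi.2 fun j =>
      (hQ' i j).continuousWithinAt).mono Ioi_subset_Ici_self
  have hslope : Tendsto (slope Q x) (𝓝[>] x) (𝓝 (bulkField a b c (Q x))) := by
    simpa only [Ici_sdiff_left] using tendsto_slope_of_hasDerivWithinAt hQ'
  -- `w` is an eigenvector of `Q z`, so comparing the slope with `F (Q z)` rather than `F (Q x)`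
  -- needs no convergence of eigenvectors
  have hlow : ∀ z ∈ Ioi x, bulkRate a b c (m z) (Q z * Q z).trace - err z ≤ slope m x z := by
    intro z hz
    obtain ⟨w, hw, hQw⟩ := (hQ z).exists_mulVec_eq_minEigenvalue_smul
    have hdiff := (hQ x).dotProduct_sub_mulVec_le_minEigenvalue_sub (hQ z) hw hQw
    have herr := (abs_le.mp (abs_dotProduct_mulVec_le hw (slope Q x z - bulkField a b c (Q z)))).1
    rw [sub_mulVec, dotProduct_sub, dotProduct_bulkField_mulVec hw hQw] at herr
    have hslope_ge : w ⬝ᵥ (slope Q x z *ᵥ w) ≤ slope m x z := by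
      rw [slope_def_module, smul_mulVec, dotProduct_smul, smul_eq_mul, slope_def_field,
        inv_mul_eq_div]
      exact div_le_div_of_nonneg_right hdiff (sub_pos.2 hz).le
    linarith
  have hrate : Continuous fun q : ℝ × ℝ => bulkRate a b c q.1 q.2 := by
    unfold bulkRate; fun_prop
  have htrace : Tendsto (fun z => (Q z * Q z).trace) (𝓝[>] x) (𝓝 (Q x * Q x).trace) :=
    ((by fun_prop : Continuous fun M : Matrix (Fin 3) (Fin 3) ℝ => (M * M).trace).tendsto _).comp
      hQc
  have herr : Tendsto err (𝓝[>] x) (𝓝 0) := by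
    have hsum : Continuous fun M : Matrix (Fin 3) (Fin 3) ℝ => ∑ i, ∑ j, |M i j| := by fun_prop
    simpa [err, Function.comp_def] using
      (hsum.tendsto _).comp (hslope.sub (((continuous_bulkField a b c).tendsto _).comp hQc))
  have hlim := ((hrate.tendsto _).comp
    ((continuousWithinAt_minEigenvalue hQ hQc).prodMk_nhds htrace)).sub herr
  rw [sub_zero] at hlim
  filter_upwards [hlim.eventually (lt_mem_nhds hp), self_mem_nhdsWithin] with z hz hzx
  exact hz.trans_le (hlow z hzx)

theorem neg_div_three_le_minEigenvalue {a b c s : ℝ} (hb : 0 ≤ b) (hc : 0 < c) (hs : 0 ≤ s)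
    (hs_root : 2 * c * s ^ 2 - b * s + 3 * a = 0) (ha : -(b ^ 2 / (3 * c)) < a)
    {Q : ℝ → Matrix (Fin 3) (Fin 3) ℝ} (hQ : ∀ t, (Q t).IsHermitian) (htr : ∀ t, (Q t).trace = 0)
    (hQ' : ∀ t, 0 ≤ t → ∀ i j,
      HasDerivWithinAt (fun u => Q u i j) (bulkField a b c (Q t) i j) (Ici 0) t)
    (h0 : -(s / 3) ≤ (hQ 0).minEigenvalue) :
    ∀ t, 0 ≤ t → -(s / 3) ≤ (hQ t).minEigenvalue := by
  intro t ht
  set m := fun t => (hQ t).minEigenvalue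
  have hmc : ∀ x, 0 ≤ x → ContinuousWithinAt m (Ici 0) x := fun x hx =>
    continuousWithinAt_minEigenvalue hQ (continuousWithinAt_pi.2 fun i =>
      continuousWithinAt_pi.2 fun j => (hQ' x hx i j).continuousWithinAt)
  have hdini : ∀ x, 0 ≤ x → ∀ r, -bulkRate a b c (m x) (Q x * Q x).trace < r →
      ∃ᶠ z in 𝓝[>] x, slope (fun t => -(m t) - s / 3) x z < r := by
    intro x hx r hr
    refine ((eventually_lt_slope_minEigenvalue (p := -r) hQ
      (fun i j => (hQ' x hx i j).mono (Ici_subset_Ici.mpr hx)) (by linarith)).mono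
      fun z hz => ?_).frequently
    have : slope (fun t => -(m t) - s / 3) x z = -slope m x z := by
      simp only [slope_def_field]; ring
    linarith
  have hbarrier : ∀ x, 0 < -(m x) - s / 3 → -(m x) - s / 3 ≤ 1 →
      -bulkRate a b c (m x) (Q x * Q x).trace < (2 * |a| + b + 1) * (-(m x) - s / 3) := by
    intro x hpos hle
    have hr₆ := (hQ x).trace_mul_self_le_of_trace_eq_zero (htr x)
    norm_num at hr₆
    exact neg_bulkRate_lt hb hc hs hs_root ha hpos hle
      ((hQ x).trace_mul_self_eq_sum_sq ▸ by positivity) (by linarith)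
  have := nonpos_of_liminf_slope_right_lt_mul (f := fun t => -(m t) - s / 3) one_pos
    (fun x hx => ((hmc x hx.1).neg.sub continuousWithinAt_const).mono Icc_subset_Ici_self)
    (fun x hx => hdini x hx.1) (by linarith) (fun x _ => hbarrier x) ⟨ht, le_rfl⟩
  linarith

/-- 3D bulk ODE, preservation of the physicality interval of
eigenvalues: with `s₊ = (b + √(b²−24ac))/(4c)` and `|a| < b²/(3c)`, if all
eigenvalues of `Q(0)` lie in `[−s₊/3, 2s₊/3]`, then the eigenvalues of `Q(t)`
lie in `[−s₊/3, 2s₊/3]` for all `t ≥ 0`. -/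
theorem bulk_ode_eigenvalue_preservation_3d
    (a b c s : ℝ) (hb : 0 ≤ b) (hc : 0 < c) (hdisc : 0 ≤ b ^ 2 - 24 * a * c)
    (ha : |a| < b ^ 2 / (3 * c))
    (hs : s = (b + Real.sqrt (b ^ 2 - 24 * a * c)) / (4 * c))
    (Q : ℝ → Matrix (Fin 3) (Fin 3) ℝ)
    (hherm : ∀ t, (Q t).IsHermitian) (htr : ∀ t, (Q t).trace = 0)
    (hode : ∀ t, 0 ≤ t → ∀ i j : Fin 3,
      HasDerivWithinAt (fun u => Q u i j)
        (-a * Q t i j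
          + b * ((Q t * Q t) i j - (Q t * Q t).trace / 3 * (if i = j then 1 else 0))
          - c * (Q t * Q t).trace * Q t i j)
        (Ici 0) t)
    (hinit : ∀ i, (hherm 0).eigenvalues i ∈ Icc (-(s / 3)) (2 * s / 3)) :
    ∀ t, 0 ≤ t → ∀ i, (hherm t).eigenvalues i ∈ Icc (-(s / 3)) (2 * s / 3) := by
  have hs₀ : 0 ≤ s := hs ▸ by positivity
  have hs_root : 2 * c * s ^ 2 - b * s + 3 * a = 0 := by
    have := (quadratic_eq_zero_iff (a := 2 * c) (b := -b) (c := 3 * a) (by positivity)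
      (by rw [discrim, Real.mul_self_sqrt hdisc]; ring) s).mpr (Or.inl (hs.trans (by ring)))
    linear_combination this
  have hQ' : ∀ t, 0 ≤ t → ∀ i j,
      HasDerivWithinAt (fun u => Q u i j) (bulkField a b c (Q t) i j) (Ici 0) t := by
    intro t ht i j
    rw [bulkField_apply]
    exact hode t ht i j
  have h0 : -(s / 3) ≤ (hherm 0).minEigenvalue := by
    obtain ⟨i, hi⟩ := (hherm 0).exists_eigenvalues_eq_minEigenvalue
    exact hi ▸ (hinit i).1
  have hm := neg_div_three_le_minEigenvalue hb hc hs₀ hs_root (neg_lt_of_abs_lt ha) hherm htr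
    hQ' h0
  intro t ht i
  have hupper := (hherm t).eigenvalues_le_of_trace_eq_zero (htr t) i
  norm_num at hupper
  exact ⟨(hm t ht).trans ((hherm t).minEigenvalue_le i), by linarith [hm t ht]⟩
end
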